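/- arXiv:1410.8350 — 5 statements merged into one kernel-verified Lean document; each statement's English description precedes it below -/
import Mathlib

section
/- If a map φ: S¹ → S¹ maps every weakly positively oriented quadruple to a weakly positively oriented quadruple, then φ admits a good lift. -/
noncomputable section

/-- The circle `S¹ = ℝ/ℤ`. -/
abbrev Circle1 : Type := AddCircle (1 : ℝ)

/-- `φt : ℝ → ℝ` is a good lift of `φ : S¹ → S¹`. -/
def GoodLift (φ : Circle1 → Circle1) (φt : ℝ → ℝ) : Prop :=
  (∀ x : ℝ, φ (↑x) = ↑(φt x)) ∧ Monotone φt ∧ ∀ x : ℝ, φt (x + 1) = φt x + 1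

/-- A `k`-tuple of points of the circle is weakly positively oriented if it admits lifts
`x̃₁ ≤ x̃₂ ≤ … ≤ x̃_k ≤ x̃₁ + 1`. -/
def WeaklyPosOriented {k : ℕ} (x : Fin k → Circle1) : Prop :=
  ∃ xt : Fin k → ℝ, (∀ i, (↑(xt i) : Circle1) = x i) ∧ Monotone xt ∧
    ∀ i j, xt i ≤ xt j + 1

/- ### Auxiliary lemmas -/

lemma circ_coe_eq {u v : ℝ} : ((u : Circle1) = (v : Circle1)) ↔ ∃ n : ℤ, v = u + n := by
  constructor
  · intro h
    obtain ⟨k, hk⟩ := AddSubgroup.mem_zmultiples_iff.mp ((QuotientAddGroup.eq_iff_sub_mem).mp h)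
    have : (k : ℝ) = u - v := by simpa using hk
    exact ⟨-k, by push_cast; linarith⟩
  · rintro ⟨n, hn⟩
    refine (QuotientAddGroup.eq_iff_sub_mem).mpr ?_
    have : u - v = (-n) • (1:ℝ) := by rw [zsmul_eq_mul, mul_one]; push_cast [hn]; ring
    rw [this]; exact AddSubgroup.zsmul_mem_zmultiples _ _

lemma wpo_of_chain {a b c d : ℝ} (h1 : a ≤ b) (h2 : b ≤ c) (h3 : c ≤ d)
    (h4 : d ≤ a + 1) :
    WeaklyPosOriented (fun i => ((![a, b, c, d] i : ℝ) : Circle1)) := by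
  have lo : ∀ i, a ≤ ![a, b, c, d] i := by
    intro i; fin_cases i <;> simp <;> linarith
  have hi : ∀ i, ![a, b, c, d] i ≤ a + 1 := by
    intro i; fin_cases i <;> simp <;> linarith
  refine ⟨![a, b, c, d], fun i => rfl, ?_, fun i j => by linarith [lo j, hi i]⟩
  intro i j hij
  fin_cases i <;> fin_cases j <;> (try exact absurd hij (by decide)) <;> simp <;> linarith

lemma wpo_extract {x : Fin 4 → Circle1} (hx : WeaklyPosOriented x) :
    ∃ a b c d : ℝ, (a : Circle1) = x 0 ∧ (b : Circle1) = x 1 ∧ (c : Circle1) = x 2 ∧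
      (d : Circle1) = x 3 ∧ a ≤ b ∧ b ≤ c ∧ c ≤ d ∧ d ≤ a + 1 := by
  obtain ⟨xt, h1, h2, h3⟩ := hx
  exact ⟨xt 0, xt 1, xt 2, xt 3, h1 0, h1 1, h1 2, h1 3,
    h2 (by decide), h2 (by decide), h2 (by decide), h3 3 0⟩

lemma keyA {a b c p q : ℝ} (hab : a ≤ b) (hbc : b ≤ c) (hc : c ≤ a + 1)
    (hm : ∃ m : ℤ, b = a + p + m) (hn : ∃ n : ℤ, c = a + q + n)
    (hp0 : 0 ≤ p) (hp1 : p < 1) (hq0 : 0 ≤ q) (hq1 : q < 1) :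
    p ≤ q ∨ q = 0 := by
  by_contra hcon
  push_neg at hcon
  obtain ⟨hqp, hq⟩ := hcon
  have hq0' : 0 < q := lt_of_le_of_ne hq0 (Ne.symm hq)
  obtain ⟨m, hm⟩ := hm
  obtain ⟨n, hn⟩ := hn
  have hp0' : 0 < p := lt_trans hq0' hqp
  -- b - a = p + m ∈ [0,1] forces m = 0
  have hm1 : (-1 : ℝ) < m := by linarith
  have hm2 : (m : ℝ) < 1 := by linarith
  have hm1' : (-1 : ℤ) < m := by exact_mod_cast hm1
  have hm2' : m < 1 := by exact_mod_cast hm2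
  have hm0 : m = 0 := by omega
  rw [hm0] at hm
  push_cast at hm
  -- now b = a + p, and c = a + q + n with p ≤ q + n ≤ 1
  have h1 : (n : ℝ) < 1 := by linarith
  have h2 : (0 : ℝ) < n := by linarith
  have h1' : n < 1 := by exact_mod_cast h1
  have h2' : (0 : ℤ) < n := by exact_mod_cast h2
  omega

lemma keyB {a b c d : ℝ} (hab : a ≤ b) (hbc : b ≤ c) (hcd : c ≤ d)
    (hd : d ≤ a + 1) (hac : (a : Circle1) = c) (hne : (a : Circle1) ≠ b) :
    (d : Circle1) = a := by
  obtain ⟨k, hk⟩ := circ_coe_eq.mp hac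
  have hk0 : (0 : ℝ) ≤ k := by linarith
  have hk1 : (k : ℝ) ≤ 1 := by linarith
  have hk0' : (0 : ℤ) ≤ k := by exact_mod_cast hk0
  have hk1' : k ≤ 1 := by exact_mod_cast hk1
  rcases (by omega : k = 0 ∨ k = 1) with rfl | rfl
  · push_cast at hk
    exact absurd (show (a : Circle1) = b by rw [show b = a by linarith]) hne
  · push_cast at hk
    have hd1 : d = a + 1 := le_antisymm hd (by linarith)
    rw [hd1]
    exact (circ_coe_eq.mpr ⟨1, by push_cast; ring⟩).symm

/-- If `φ : S¹ → S¹` maps every weakly positively oriented quadruple to a weakly positively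
oriented quadruple, then `φ` admits a good lift. -/
theorem exists_goodLift_of_maps_quadruples (φ : Circle1 → Circle1)
    (h : ∀ x : Fin 4 → Circle1, WeaklyPosOriented x → WeaklyPosOriented (φ ∘ x)) :
    ∃ φt : ℝ → ℝ, GoodLift φ φt := by
  classical
  obtain ⟨a₀, ha₀⟩ : ∃ a₀ : ℝ, (a₀ : Circle1) = φ 0 :=
    ⟨(AddCircle.equivIco 1 0 (φ 0) : ℝ), (AddCircle.equivIco 1 0).symm_apply_apply (φ 0)⟩
  set e := AddCircle.equivIco 1 a₀ with he
  set r : Circle1 → ℝ := fun c => (e c : ℝ) with hrdef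
  have hrmem : ∀ c, r c ∈ Set.Ico a₀ (a₀ + 1) := fun c => (e c).2
  have hrcoe : ∀ c, ((r c : ℝ) : Circle1) = c := fun c => e.symm_apply_apply c
  have hcoe0 : ((0 : ℝ) : Circle1) = 0 := by norm_num
  -- any lift of `c` differs from `r c` by an integer
  have hrep : ∀ (u : ℝ) (c : Circle1), (u : Circle1) = c → ∃ m : ℤ, u = r c + m := by
    intro u c hu
    exact circ_coe_eq.mp ((hrcoe c).trans hu.symm)
  have hra0 : r (φ 0) = a₀ := by
    obtain ⟨n, hn⟩ := hrep a₀ (φ 0) ha₀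
    obtain ⟨hl, hu⟩ := hrmem (φ 0)
    have h2 : (n : ℝ) ≤ 0 := by linarith
    have h3 : (-1 : ℝ) < n := by linarith
    have h2' : n ≤ 0 := by exact_mod_cast h2
    have h3' : (-1 : ℤ) < n := by exact_mod_cast h3
    have : n = 0 := by omega
    rw [this] at hn; push_cast at hn; linarith
  -- injectivity-type fact
  have hrinj : ∀ c, r c = a₀ → c = φ 0 := by
    intro c hc
    rw [← hrcoe c, hc, ha₀]
  -- Lemma 1 : for 0 ≤ x ≤ y ≤ 1, either r (φ x) ≤ r (φ y) or φ y = φ 0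
  have lem1 : ∀ x y : ℝ, 0 ≤ x → x ≤ y → y ≤ 1 →
      r (φ ↑x) ≤ r (φ ↑y) ∨ r (φ ↑y) = a₀ := by
    intro x y h0 hxy hy1
    have hw := h _ (wpo_of_chain (a := 0) (b := x) (c := y) (d := 1) h0 hxy hy1 (by norm_num))
    obtain ⟨A, B, C, D, hA, hB, hC, hD, hAB, hBC, hCD, hDA⟩ := wpo_extract hw
    simp only [Function.comp_apply, Matrix.cons_val_zero, Matrix.cons_val_one,
      Matrix.head_cons, Matrix.cons_val_two, Matrix.tail_cons, Matrix.cons_val_three]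
      at hA hB hC hD
    rw [hcoe0] at hA
    obtain ⟨k, hk⟩ := hrep A (φ 0) hA
    obtain ⟨m, hm⟩ := hrep B (φ ↑x) hB
    obtain ⟨n, hn⟩ := hrep C (φ ↑y) hC
    have hkey := keyA (p := r (φ ↑x) - a₀) (q := r (φ ↑y) - a₀) hAB hBC
      (le_trans hCD hDA)
      ⟨m - k, by push_cast; rw [hm, hk, hra0]; ring⟩
      ⟨n - k, by push_cast; rw [hn, hk, hra0]; ring⟩
      (by linarith [(hrmem (φ ↑x)).1]) (by linarith [(hrmem (φ ↑x)).2])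
      (by linarith [(hrmem (φ ↑y)).1]) (by linarith [(hrmem (φ ↑y)).2])
    rcases hkey with h' | h'
    · exact Or.inl (by linarith)
    · exact Or.inr (by linarith)
  -- Lemma 2 : propagation of return to the base value
  have lem2 : ∀ t x y : ℝ, 0 ≤ t → t ≤ x → x ≤ y → y ≤ 1 →
      φ ↑t ≠ φ 0 → φ ↑x = φ 0 → φ ↑y = φ 0 := by
    intro t x y h0 htx hxy hy1 hne hx0
    have hw := h _ (wpo_of_chain (a := 0) (b := t) (c := x) (d := y) h0 htx hxy
      (by linarith))
    obtain ⟨A, B, C, D, hA, hB, hC, hD, hAB, hBC, hCD, hDA⟩ := wpo_extract hw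
    simp only [Function.comp_apply, Matrix.cons_val_zero, Matrix.cons_val_one,
      Matrix.head_cons, Matrix.cons_val_two, Matrix.tail_cons, Matrix.cons_val_three]
      at hA hB hC hD
    rw [hcoe0] at hA
    have hAC : (A : Circle1) = C := by rw [hA, hC, hx0]
    have hAB' : (A : Circle1) ≠ B := by
      rw [hA, hB]; exact fun hh => hne hh.symm
    have hkb := keyB hAB hBC hCD hDA hAC hAB'
    rw [hD, hA] at hkb
    exact hkb
  -- the exceptional set
  set E : ℝ → Prop := fun x => φ ↑x = φ 0 ∧ ∃ t, 0 ≤ t ∧ t ≤ x ∧ φ ↑t ≠ φ 0 with hEdef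
  set f : ℝ → ℝ := fun z => if E z then a₀ + 1 else r (φ ↑z) with hfdef
  have hfE : ∀ z, E z → f z = a₀ + 1 := by
    intro z hz; simp only [hfdef]; rw [if_pos hz]
  have hfnE : ∀ z, ¬ E z → f z = r (φ ↑z) := by
    intro z hz; simp only [hfdef]; rw [if_neg hz]
  have hflo : ∀ z, a₀ ≤ f z := by
    intro z
    by_cases hz : E z
    · rw [hfE z hz]; linarith
    · rw [hfnE z hz]; exact (hrmem (φ ↑z)).1
  have hfhi : ∀ z, f z ≤ a₀ + 1 := by
    intro z
    by_cases hz : E z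
    · rw [hfE z hz]
    · rw [hfnE z hz]; linarith [(hrmem (φ ↑z)).2]
  have hflift : ∀ z, (↑(f z) : Circle1) = φ ↑z := by
    intro z
    by_cases hz : E z
    · rw [hfE z hz, hz.1, ← ha₀]
      exact (circ_coe_eq.mpr ⟨1, by push_cast; ring⟩).symm
    · rw [hfnE z hz]; exact hrcoe (φ ↑z)
  have hfmono : ∀ x y : ℝ, 0 ≤ x → x ≤ y → y ≤ 1 → f x ≤ f y := by
    intro x y h0 hxy hy1
    by_cases hEy : E y
    · rw [hfE y hEy]; exact hfhi x
    · by_cases hEx : E x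
      · obtain ⟨hx0, t, ht0, htx, htne⟩ := hEx
        exact absurd ⟨lem2 t x y ht0 htx hxy hy1 htne hx0, t, ht0, le_trans htx hxy, htne⟩ hEy
      · rw [hfnE x hEx, hfnE y hEy]
        rcases lem1 x y h0 hxy hy1 with h' | h'
        · exact h'
        · have hy0 : φ ↑y = φ 0 := hrinj _ h'
          by_cases hx0 : φ ↑x = φ 0
          · rw [hx0, hy0]
          · exact absurd ⟨hy0, x, h0, hxy, hx0⟩ hEy
  -- the good lift
  refine ⟨fun x => f (Int.fract x) + ⌊x⌋, ?_, ?_, ?_⟩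
  · intro x
    have h1 : ((f (Int.fract x) + (⌊x⌋ : ℝ) : ℝ) : Circle1) = ↑(f (Int.fract x)) :=
      (circ_coe_eq.mpr ⟨⌊x⌋, by push_cast; ring⟩).symm
    rw [h1, hflift]
    congr 1
    exact circ_coe_eq.mpr ⟨-⌊x⌋, by rw [Int.fract]; push_cast; ring⟩
  · intro x y hxy
    simp only
    have hfl := Int.floor_mono hxy
    rcases eq_or_lt_of_le hfl with hfe | hfl'
    · have hfr : Int.fract x ≤ Int.fract y := by
        rw [Int.fract, Int.fract, hfe]; linarith
      have := hfmono (Int.fract x) (Int.fract y) (Int.fract_nonneg x) hfr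
        (le_of_lt (Int.fract_lt_one y))
      have hc : ((⌊x⌋ : ℝ)) = ((⌊y⌋ : ℝ)) := by exact_mod_cast hfe
      linarith
    · have hc : ((⌊x⌋ : ℝ)) + 1 ≤ ((⌊y⌋ : ℝ)) := by exact_mod_cast hfl'
      linarith [hfhi (Int.fract x), hflo (Int.fract y)]
  · intro x
    have h1 : Int.fract (x + 1) = Int.fract x := by
      simpa using Int.fract_add_int x 1
    have h2 : ⌊x + 1⌋ = ⌊x⌋ + 1 := by
      simpa using Int.floor_add_int x 1
    simp only [h1, h2]
    push_cast
    ring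
end
end

section
/- There exists a map φ: S¹ → S¹ which maps every weakly positively oriented triple to a weakly positively oriented triple, but which does not admit a good lift. Concretely, the map sending [t] to [0] for t ∈ [0,1/4) ∪ [1/2,3/4) and to [1/2] for t ∈ [1/4,1/2) ∪ [3/4,1) has this property. -/
noncomputable section

lemma circle1_coe_eq_coe_iff {a b : ℝ} : (↑a : Circle1) = ↑b ↔ ∃ n : ℤ, a = b + n := by
  have h1 : (↑a : Circle1) = ↑b ↔ ((a - b : ℝ) : Circle1) = 0 := by
    rw [AddCircle.coe_sub, sub_eq_zero]
  rw [h1, AddCircle.coe_eq_zero_iff]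
  constructor
  · rintro ⟨n, hn⟩
    exact ⟨n, by push_cast [zsmul_eq_mul] at hn; linarith⟩
  · rintro ⟨n, hn⟩
    exact ⟨n, by push_cast [zsmul_eq_mul]; linarith⟩

lemma circle1_coe_add_one (t : ℝ) : ((t + 1 : ℝ) : Circle1) = ↑t :=
  AddCircle.coe_add_period 1 t

lemma wpo3 (x : Fin 3 → Circle1) (a b c : ℝ) (h0 : x 0 = ↑a) (h1 : x 1 = ↑b)
    (h2 : x 2 = ↑c) (hab : a ≤ b) (hbc : b ≤ c) (hca : c ≤ a + 1) :
    WeaklyPosOriented x := by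
  refine ⟨![a, b, c], ?_, ?_, ?_⟩
  · intro i
    fin_cases i <;> simp [h0, h1, h2]
  · intro i j hij
    fin_cases i <;> fin_cases j <;>
      simp_all <;> linarith
  · intro i j
    fin_cases i <;> fin_cases j <;> simp <;> linarith

lemma wpo_of_two_values (x : Fin 3 → Circle1)
    (h : ∀ i, x i = ((0 : ℝ) : Circle1) ∨ x i = ((1/2 : ℝ) : Circle1)) :
    WeaklyPosOriented x := by
  have e1 : ((1 : ℝ) : Circle1) = ((0 : ℝ) : Circle1) := by
    rw [← circle1_coe_add_one 0, zero_add]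
  have e32 : ((3/2 : ℝ) : Circle1) = ((1/2 : ℝ) : Circle1) := by
    rw [← circle1_coe_add_one (1/2)]; norm_num
  rcases h 0 with h0 | h0 <;> rcases h 1 with h1 | h1 <;> rcases h 2 with h2 | h2
  · exact wpo3 x 0 0 0 h0 h1 h2 le_rfl le_rfl (by norm_num)
  · exact wpo3 x 0 0 (1/2) h0 h1 h2 le_rfl (by norm_num) (by norm_num)
  · exact wpo3 x 0 (1/2) 1 h0 h1 (by rw [h2, e1]) (by norm_num) (by norm_num) (by norm_num)
  · exact wpo3 x 0 (1/2) (1/2) h0 h1 h2 (by norm_num) le_rfl (by norm_num)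
  · exact wpo3 x (1/2) 1 1 h0 (by rw [h1, e1]) (by rw [h2, e1]) (by norm_num) le_rfl
      (by norm_num)
  · exact wpo3 x (1/2) 1 (3/2) h0 (by rw [h1, e1]) (by rw [h2, e32]) (by norm_num)
      (by norm_num) (by norm_num)
  · exact wpo3 x (1/2) (1/2) 1 h0 h1 (by rw [h2, e1]) le_rfl (by norm_num) (by norm_num)
  · exact wpo3 x (1/2) (1/2) (1/2) h0 h1 h2 le_rfl le_rfl (by norm_num)

/-- There is a map `φ : S¹ → S¹` (concretely, the one sending `[t]` to `[0]` for
`t ∈ [0,1/4) ∪ [1/2,3/4)` and to `[1/2]` for `t ∈ [1/4,1/2) ∪ [3/4,1)`) which maps every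
weakly positively oriented triple to a weakly positively oriented triple, but which does
not admit a good lift. -/
theorem exists_triplePreserving_without_goodLift :
    ∃ φ : Circle1 → Circle1,
      (∀ t : ℝ, t ∈ Set.Ico (0 : ℝ) 1 →
        φ (↑t) = if t < 1/4 ∨ (1/2 ≤ t ∧ t < 3/4) then ((0 : ℝ) : Circle1)
          else ((1/2 : ℝ) : Circle1)) ∧
      (∀ x : Fin 3 → Circle1, WeaklyPosOriented x → WeaklyPosOriented (φ ∘ x)) ∧
      ¬ ∃ φt : ℝ → ℝ, GoodLift φ φt := by
  set f : ℝ → Circle1 := fun t =>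
    if t < 1/4 ∨ (1/2 ≤ t ∧ t < 3/4) then ((0 : ℝ) : Circle1) else ((1/2 : ℝ) : Circle1)
    with hf
  refine ⟨AddCircle.liftIco 1 0 f, ?_, ?_, ?_⟩
  · intro t ht
    exact AddCircle.liftIco_coe_apply (by simpa using ht)
  · -- every value of φ is [0] or [1/2]
    intro x _
    apply wpo_of_two_values
    intro i
    have : ∀ y : Circle1, AddCircle.liftIco 1 0 f y = ((0:ℝ) : Circle1) ∨
        AddCircle.liftIco 1 0 f y = ((1/2:ℝ) : Circle1) := by
      intro y
      induction y using QuotientAddGroup.induction_on with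
      | H r =>
        have hfr : Int.fract r ∈ Set.Ico (0:ℝ) (0 + 1) := by
          simp [Int.fract_nonneg, Int.fract_lt_one]
        have hco : ((Int.fract r : ℝ) : Circle1) = (r : Circle1) := by
          rw [circle1_coe_eq_coe_iff]
          exact ⟨-⌊r⌋, by rw [Int.fract]; push_cast; ring⟩
        rw [show ((r : Circle1)) = ((Int.fract r : ℝ) : Circle1) from hco.symm,
          AddCircle.liftIco_coe_apply hfr, hf]
        by_cases h : Int.fract r < 1/4 ∨ (1/2 ≤ Int.fract r ∧ Int.fract r < 3/4)
        · left; exact if_pos h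
        · right; exact if_neg h
    exact this (x i)
  · rintro ⟨φt, hlift, hmono, hper⟩
    set φ := AddCircle.liftIco 1 0 f with hφ
    have key : ∀ t : ℝ, t ∈ Set.Ico (0 : ℝ) 1 → (↑(φt t) : Circle1) =
        if t < 1/4 ∨ (1/2 ≤ t ∧ t < 3/4) then ((0 : ℝ) : Circle1)
          else ((1/2 : ℝ) : Circle1) := by
      intro t ht
      rw [← hlift t]
      exact AddCircle.liftIco_coe_apply (by simpa using ht)
    have h0 : (↑(φt 0) : Circle1) = ((0:ℝ) : Circle1) := by
      have := key 0 (by norm_num); rwa [if_pos (by norm_num)] at this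
    have h14 : (↑(φt (1/4)) : Circle1) = ((1/2:ℝ) : Circle1) := by
      have := key (1/4) (by norm_num); rwa [if_neg (by norm_num)] at this
    have h12 : (↑(φt (1/2)) : Circle1) = ((0:ℝ) : Circle1) := by
      have := key (1/2) (by norm_num); rwa [if_pos (by norm_num)] at this
    have h34 : (↑(φt (3/4)) : Circle1) = ((1/2:ℝ) : Circle1) := by
      have := key (3/4) (by norm_num); rwa [if_neg (by norm_num)] at this
    obtain ⟨n, hn⟩ := circle1_coe_eq_coe_iff.mp h0
    obtain ⟨k, hk⟩ := circle1_coe_eq_coe_iff.mp h14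
    obtain ⟨j, hj⟩ := circle1_coe_eq_coe_iff.mp h12
    obtain ⟨l, hl⟩ := circle1_coe_eq_coe_iff.mp h34
    have m1 : φt 0 ≤ φt (1/4) := hmono (by norm_num)
    have m2 : φt (1/4) ≤ φt (1/2) := hmono (by norm_num)
    have m3 : φt (1/2) ≤ φt (3/4) := hmono (by norm_num)
    have m4 : φt (3/4) ≤ φt 1 := hmono (by norm_num)
    have hp : φt 1 = φt 0 + 1 := by
      have := hper 0; rwa [zero_add] at this
    rw [hn, hk] at m1
    rw [hk, hj] at m2
    rw [hj, hl] at m3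
    rw [hl, hp, hn] at m4
    -- m1 : (n:ℝ) ≤ 1/2 + k, m2 : 1/2 + k ≤ 0 + j, m3 : 0 + j ≤ 1/2 + l,
    -- m4 : 1/2 + l ≤ 0 + n + 1
    have i1 : n ≤ k := by
      have : (n : ℝ) < k + 1 := by linarith
      exact_mod_cast Int.lt_add_one_iff.mp (by exact_mod_cast this)
    have i2 : k < j := by
      have : (k : ℝ) < j := by linarith
      exact_mod_cast this
    have i3 : j ≤ l := by
      have : (j : ℝ) < l + 1 := by linarith
      exact_mod_cast Int.lt_add_one_iff.mp (by exact_mod_cast this)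
    have i4 : l < n + 1 := by
      have : (l : ℝ) < n + 1 := by linarith
      exact_mod_cast this
    omega
end
end

section
/- Semi-conjugacy of circle actions is an equivalence relation: it is reflexive, symmetric, and transitive. -/
noncomputable section

/-- A non-decreasing degree one map of the circle is a map admitting a good lift. -/
def IsNonDecDegreeOne (φ : Circle1 → Circle1) : Prop :=
  ∃ φt : ℝ → ℝ, GoodLift φ φt

/-- An orientation-preserving homeomorphism of the circle: a map admitting a strictly
increasing surjective lift `ℝ → ℝ` commuting with the translation `x ↦ x + 1`. -/
def IsOPH (f : Circle1 → Circle1) : Prop :=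
  ∃ ft : ℝ → ℝ, (∀ x : ℝ, f (↑x) = ↑(ft x)) ∧ StrictMono ft ∧
    Function.Surjective ft ∧ ∀ x : ℝ, ft (x + 1) = ft x + 1

/-- A circle action of a group `Γ`: a homomorphism `Γ → Homeo⁺(S¹)`. -/
def IsCircleAction {Γ : Type*} [Group Γ] (ρ : Γ → Circle1 → Circle1) : Prop :=
  (∀ γ, IsOPH (ρ γ)) ∧ ρ 1 = id ∧ ∀ g h : Γ, ρ (g * h) = ρ g ∘ ρ h

/-- `ρ₁` is left-semi-conjugate to `ρ₂`: there is a non-decreasing degree one map `φ`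
with `ρ₁(γ) ∘ φ = φ ∘ ρ₂(γ)` for all `γ`. -/
def LeftSemiconj {Γ : Type*} [Group Γ] (ρ₁ ρ₂ : Γ → Circle1 → Circle1) : Prop :=
  ∃ φ : Circle1 → Circle1, IsNonDecDegreeOne φ ∧ ∀ γ : Γ, ρ₁ γ ∘ φ = φ ∘ ρ₂ γ

/-- `ρ₁` and `ρ₂` are semi-conjugate: `ρ₁` is both left- and right-semi-conjugate to `ρ₂`. -/
def Semiconj {Γ : Type*} [Group Γ] (ρ₁ ρ₂ : Γ → Circle1 → Circle1) : Prop :=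
  LeftSemiconj ρ₁ ρ₂ ∧ LeftSemiconj ρ₂ ρ₁

/-- Semi-conjugacy of circle actions is an equivalence relation: reflexive, symmetric
and transitive. -/
theorem semiconj_equivalence {Γ : Type*} [Group Γ] :
    (∀ ρ : Γ → Circle1 → Circle1, IsCircleAction ρ → Semiconj ρ ρ) ∧
    (∀ ρ₁ ρ₂ : Γ → Circle1 → Circle1, IsCircleAction ρ₁ → IsCircleAction ρ₂ →
      Semiconj ρ₁ ρ₂ → Semiconj ρ₂ ρ₁) ∧
    (∀ ρ₁ ρ₂ ρ₃ : Γ → Circle1 → Circle1, IsCircleAction ρ₁ → IsCircleAction ρ₂ →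
      IsCircleAction ρ₃ → Semiconj ρ₁ ρ₂ → Semiconj ρ₂ ρ₃ → Semiconj ρ₁ ρ₃) := by
  have hrefl : ∀ (ρ : Γ → Circle1 → Circle1), LeftSemiconj ρ ρ := by
    intro ρ
    refine ⟨id, ⟨id, fun x => rfl, monotone_id, fun x => rfl⟩, fun γ => rfl⟩
  have htrans : ∀ (ρ₁ ρ₂ ρ₃ : Γ → Circle1 → Circle1),
      LeftSemiconj ρ₁ ρ₂ → LeftSemiconj ρ₂ ρ₃ → LeftSemiconj ρ₁ ρ₃ := by
    rintro ρ₁ ρ₂ ρ₃ ⟨φ, ⟨φt, hφ1, hφ2, hφ3⟩, hφc⟩ ⟨ψ, ⟨ψt, hψ1, hψ2, hψ3⟩, hψc⟩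
    refine ⟨φ ∘ ψ, ⟨φt ∘ ψt, fun x => by simp [hψ1 x, hφ1 (ψt x)],
      hφ2.comp hψ2, fun x => by simp [hψ3 x, hφ3 (ψt x)]⟩, fun γ => ?_⟩
    calc ρ₁ γ ∘ (φ ∘ ψ) = (ρ₁ γ ∘ φ) ∘ ψ := rfl
      _ = (φ ∘ ρ₂ γ) ∘ ψ := by rw [hφc γ]
      _ = φ ∘ (ρ₂ γ ∘ ψ) := rfl
      _ = φ ∘ (ψ ∘ ρ₃ γ) := by rw [hψc γ]
  refine ⟨fun ρ _ => ⟨hrefl ρ, hrefl ρ⟩,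
    fun ρ₁ ρ₂ _ _ h => ⟨h.2, h.1⟩,
    fun ρ₁ ρ₂ ρ₃ _ _ _ h12 h23 =>
      ⟨htrans ρ₁ ρ₂ ρ₃ h12.1 h23.1, htrans ρ₃ ρ₂ ρ₁ h23.2 h12.2⟩⟩
end
end

section
/- Let φ̃: ℝ → ℝ be a non-decreasing map commuting with integer translations, and for x₀ ∈ ℝ let S_{x₀} = φ̃⁻¹(φ̃(x₀)). Then each S_{x₀} is a bounded interval contained in (x₀−1, x₀+1), and the sets K₋ = {x : x = inf S_x} and K₊ = {x : x = sup S_x} cannot both be empty; moreover φ̃ restricted to K₋ is injective, and likewise on K₊. -/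
noncomputable section

/-- Let `φ̃ : ℝ → ℝ` be non-decreasing and commute with integer translations, and for
`x₀ ∈ ℝ` let `S_{x₀} = φ̃⁻¹(φ̃(x₀))`. Then each `S_{x₀}` is an interval contained in
`(x₀ − 1, x₀ + 1)` (in particular bounded), the sets `K₋ = {x : x = inf S_x}` and
`K₊ = {x : x = sup S_x}` cannot both be empty, and `φ̃` is injective on `K₋` and on
`K₊`. -/
theorem fibers_of_goodLift (φt : ℝ → ℝ) (hmono : Monotone φt)
    (hcomm : ∀ x : ℝ, φt (x + 1) = φt x + 1) :
    (∀ x₀ : ℝ, {x : ℝ | φt x = φt x₀} ⊆ Set.Ioo (x₀ - 1) (x₀ + 1)) ∧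
    (∀ x₀ : ℝ, ({x : ℝ | φt x = φt x₀} : Set ℝ).OrdConnected) ∧
    (∀ x₀ : ℝ, Bornology.IsBounded {x : ℝ | φt x = φt x₀}) ∧
    ({x : ℝ | x = sInf {y : ℝ | φt y = φt x}}.Nonempty ∨
      {x : ℝ | x = sSup {y : ℝ | φt y = φt x}}.Nonempty) ∧
    Set.InjOn φt {x : ℝ | x = sInf {y : ℝ | φt y = φt x}} ∧
    Set.InjOn φt {x : ℝ | x = sSup {y : ℝ | φt y = φt x}} := by
  have hsub : ∀ x₀ : ℝ, {x : ℝ | φt x = φt x₀} ⊆ Set.Ioo (x₀ - 1) (x₀ + 1) := by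
    intro x₀ x hx
    simp only [Set.mem_setOf_eq] at hx
    constructor
    · by_contra h
      push_neg at h
      have h1 : φt x + 1 ≤ φt x₀ := by
        have := hmono (by linarith : x + 1 ≤ x₀)
        rw [hcomm] at this; linarith
      linarith [hx]
    · by_contra h
      push_neg at h
      have h1 : φt x₀ + 1 ≤ φt x := by
        have := hmono (by linarith : x₀ + 1 ≤ x)
        rw [hcomm] at this; linarith
      linarith [hx]
  refine ⟨hsub, ?_, ?_, ?_, ?_, ?_⟩
  · intro x₀
    constructor
    intro x hx y hy z hz
    simp only [Set.mem_setOf_eq] at hx hy ⊢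
    exact le_antisymm ((hmono hz.2).trans hy.le) (hx ▸ hmono hz.1)
  · intro x₀
    exact (Metric.isBounded_Ioo _ _).subset (hsub x₀)
  · -- nonemptiness
    set S : ℝ → Set ℝ := fun x => {y : ℝ | φt y = φt x} with hS
    have hmem : ∀ x, x ∈ S x := fun x => rfl
    have hbddA : ∀ x, BddAbove (S x) := fun x =>
      ⟨x + 1, fun y hy => ((hsub x) hy).2.le⟩
    have hbddB : ∀ x, BddBelow (S x) := fun x =>
      ⟨x - 1, fun y hy => ((hsub x) hy).1.le⟩
    set b := sSup (S 0) with hb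
    have hb0 : (0 : ℝ) ≤ b := le_csSup (hbddA 0) (hmem 0)
    by_cases hbc : φt b = φt 0
    · right
      refine ⟨b, ?_⟩
      have : S b = S 0 := by ext y; simp [S, hbc]
      simp only [Set.mem_setOf_eq]
      rw [show {y : ℝ | φt y = φt b} = S b from rfl, this]
    · left
      refine ⟨b, ?_⟩
      have hlt : φt 0 < φt b := lt_of_le_of_ne (hmono hb0) (Ne.symm hbc)
      have hlb : ∀ y ∈ S b, b ≤ y := by
        intro y hy
        by_contra h
        push_neg at h
        obtain ⟨s, hs, hys⟩ := exists_lt_of_lt_csSup ⟨0, hmem 0⟩ h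
        have : φt y ≤ φt 0 := (hmono hys.le).trans_eq hs
        have hyb : φt y = φt b := hy
        linarith
      simp only [Set.mem_setOf_eq]
      exact le_antisymm (le_csInf ⟨b, hmem b⟩ hlb) (csInf_le (hbddB b) (hmem b))
  · intro x hx y hy hxy
    simp only [Set.mem_setOf_eq] at hx hy
    have : {z : ℝ | φt z = φt x} = {z : ℝ | φt z = φt y} := by ext z; simp [hxy]
    rw [hx, hy, this]
  · intro x hx y hy hxy
    simp only [Set.mem_setOf_eq] at hx hy
    have : {z : ℝ | φt z = φt x} = {z : ℝ | φt z = φt y} := by ext z; simp [hxy]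
    rw [hx, hy, this]
end
end

section
/- Let ρ₁, ρ₂: Γ → Homeo⁺(S¹) be minimal circle actions. If ρ₁ is left-semi-conjugate to ρ₂ via a non-decreasing degree one map φ, then φ is a homeomorphism, and hence ρ₁ and ρ₂ are conjugate. -/
noncomputable section

/-- A circle action is minimal if every orbit is dense. -/
def IsMinimalAction {Γ : Type*} [Group Γ] (ρ : Γ → Circle1 → Circle1) : Prop :=
  ∀ x : Circle1, Dense (Set.range fun γ : Γ => ρ γ x)

/-!
The semi-conjugacy `φ` has dense range (it contains a `ρ₁`-orbit), so its monotone lift is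
continuous and surjective. The set of points near which `φ` is locally constant is open, and
its complement is closed and `ρ₂`-invariant, hence by minimality of `ρ₂` it is empty or
everything. It cannot be everything, since `φ` is surjective on the connected circle; so it is
empty, the lift has no flat interval, and `φ` is a continuous bijection of the compact circle,
i.e. a homeomorphism.
-/

open Set Function Filter Topology

def locallyConstantLocus {X Y : Type*} [TopologicalSpace X] (φ : X → Y) : Set X :=
  {p | ∀ᶠ q in 𝓝 p, φ q = φ p}

section LocallyConstantLocus

variable {X Y : Type*} [TopologicalSpace X] {φ : X → Y}

theorem isOpen_locallyConstantLocus : IsOpen (locallyConstantLocus φ) := by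
  refine isOpen_iff_mem_nhds.2 fun p hp => ?_
  filter_upwards [eventually_eventually_nhds.2 hp, hp] with q hq hqp
  exact hq.mono fun r hr => hr.trans hqp.symm

theorem locallyConstantLocus_eq_univ_iff :
    locallyConstantLocus φ = univ ↔ IsLocallyConstant φ := by
  simp only [eq_univ_iff_forall, locallyConstantLocus, mem_ofPred_eq,
    IsLocallyConstant.iff_eventually_eq]

theorem mapsTo_compl_locallyConstantLocus {g : X → X} {h : Y → Y} (hg : Continuous g)
    (hh : Injective h) (hφ : ∀ x, φ (g x) = h (φ x)) :
    MapsTo g (locallyConstantLocus φ)ᶜ (locallyConstantLocus φ)ᶜ := by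
  intro p hp hgp
  apply hp
  filter_upwards [hg.continuousAt.eventually hgp] with q hq
  exact hh (by rwa [hφ, hφ] at hq)

end LocallyConstantLocus

theorem not_isLocallyConstant_of_surjective {X Y : Type*} [TopologicalSpace X]
    [PreconnectedSpace X] [Nontrivial Y] {f : X → Y} (hf : Surjective f) :
    ¬IsLocallyConstant f := by
  intro hlc
  obtain ⟨a, b, hab⟩ := exists_pair_ne Y
  obtain ⟨x, rfl⟩ := hf a
  obtain ⟨y, rfl⟩ := hf b
  exact hab (hlc.apply_eq_of_isPreconnected isPreconnected_univ (mem_univ x) (mem_univ y))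

theorem eq_univ_of_isClosed_of_mapsTo {X ι : Type*} [TopologicalSpace X] {f : ι → X → X}
    (hmin : ∀ x, Dense (range fun i => f i x)) {S : Set X} (hS : IsClosed S)
    (hinv : ∀ i, MapsTo (f i) S S) (hne : S.Nonempty) : S = univ := by
  obtain ⟨x, hx⟩ := hne
  have horbit : (range fun i => f i x) ⊆ S := range_subset_iff.2 fun i => hinv i hx
  exact eq_univ_of_univ_subset ((hmin x).closure_eq ▸ closure_minimal horbit hS)

theorem continuous_of_lift {p q : ℝ} {f : AddCircle p → AddCircle q} {ft : ℝ → ℝ}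
    (hf : ∀ x : ℝ, f x = ft x) (hc : Continuous ft) : Continuous f := by
  refine (QuotientAddGroup.isQuotientMap_mk _).continuous_iff.2 ?_
  exact (continuous_quotient_mk'.comp hc).congr fun x => (hf x).symm

namespace Circle1

theorem coe_eq_coe_iff {x y : ℝ} : (x : Circle1) = y ↔ ∃ k : ℤ, y = x + k := by
  rw [eq_comm, ← sub_eq_zero, ← AddCircle.coe_sub, AddCircle.coe_eq_zero_iff]
  simp only [zsmul_eq_mul, mul_one, eq_comm, sub_eq_iff_eq_add']

instance : Nontrivial Circle1 := by
  have : Fact ((0 : ℝ) < 1) := ⟨one_pos⟩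
  refine ⟨⟨((0 : ℝ) : Circle1), ((1 / 2 : ℝ) : Circle1), fun h => ?_⟩⟩
  rw [AddCircle.coe_eq_coe_iff_of_mem_Ico (a := 0) (by norm_num) (by norm_num)] at h
  norm_num at h

end Circle1

namespace GoodLift

variable {φ : Circle1 → Circle1} {φt : ℝ → ℝ}

def toCircleDeg1Lift (h : GoodLift φ φt) : CircleDeg1Lift where
  toFun := φt
  monotone' := h.2.1
  map_add_one' := h.2.2

theorem map_add_int (h : GoodLift φ φt) (x : ℝ) (k : ℤ) : φt (x + k) = φt x + k :=
  h.toCircleDeg1Lift.map_add_int x k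

theorem denseRange (h : GoodLift φ φt) (hd : DenseRange φ) : DenseRange φt := by
  refine (hd.preimage QuotientAddGroup.isOpenMap_coe).mono ?_
  rintro y ⟨p, hp⟩
  obtain ⟨x, rfl⟩ := QuotientAddGroup.mk_surjective p
  obtain ⟨k, rfl⟩ := Circle1.coe_eq_coe_iff.1 ((h.1 x).symm.trans hp)
  exact ⟨x + k, h.map_add_int x k⟩

theorem continuous_lift_of_denseRange (h : GoodLift φ φt) (hd : DenseRange φ) :
    Continuous φt :=
  h.2.1.continuous_of_denseRange (h.denseRange hd)

theorem surjective_lift_of_continuous (h : GoodLift φ φt) (hc : Continuous φt) :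
    Surjective φt :=
  h.toCircleDeg1Lift.continuous_iff_surjective.1 hc

theorem continuous (h : GoodLift φ φt) (hc : Continuous φt) : Continuous φ :=
  continuous_of_lift h.1 hc

theorem surjective (h : GoodLift φ φt) (hs : Surjective φt) : Surjective φ := by
  intro q
  obtain ⟨y, rfl⟩ := QuotientAddGroup.mk_surjective q
  obtain ⟨x, rfl⟩ := hs y
  exact ⟨x, h.1 x⟩

theorem injective (h : GoodLift φ φt) (hi : Injective φt) : Injective φ := by
  intro a b hab
  obtain ⟨x, rfl⟩ := QuotientAddGroup.mk_surjective a
  obtain ⟨y, rfl⟩ := QuotientAddGroup.mk_surjective b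
  have hxy : ((φt x : ℝ) : Circle1) = φt y := (h.1 x).symm.trans (hab.trans (h.1 y))
  obtain ⟨k, hk⟩ := Circle1.coe_eq_coe_iff.1 hxy
  rw [← h.map_add_int x k] at hk
  exact Circle1.coe_eq_coe_iff.2 ⟨k, hi hk⟩

theorem mid_mem_locallyConstantLocus (h : GoodLift φ φt) {u v : ℝ} (huv : u < v)
    (heq : φt u = φt v) : (((u + v) / 2 : ℝ) : Circle1) ∈ locallyConstantLocus φ := by
  have hflat : ∀ t ∈ Icc u v, φt t = φt u := fun t ht =>
    le_antisymm (heq ▸ h.2.1 ht.2) (h.2.1 ht.1)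
  have hmid : (u + v) / 2 ∈ Icc u v := ⟨by linarith, by linarith⟩
  have hnhds : Icc u v ∈ 𝓝 ((u + v) / 2) := Icc_mem_nhds (by linarith) (by linarith)
  change ∀ᶠ q in 𝓝 (QuotientAddGroup.mk ((u + v) / 2)), _
  rw [QuotientAddGroup.nhds_eq, eventually_map]
  filter_upwards [hnhds] with t ht
  rw [h.1, h.1, hflat t ht, hflat _ hmid]

theorem injective_lift_of_locallyConstantLocus_eq_empty (h : GoodLift φ φt)
    (hL : locallyConstantLocus φ = ∅) : Injective φt := by
  intro u v huv
  by_contra hne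
  rcases lt_or_gt_of_ne hne with hlt | hlt
  · simpa [hL] using h.mid_mem_locallyConstantLocus hlt huv
  · simpa [hL] using h.mid_mem_locallyConstantLocus hlt huv.symm

end GoodLift

namespace IsOPH

variable {f : Circle1 → Circle1}

theorem continuous (hf : IsOPH f) : Continuous f := by
  obtain ⟨ft, hlift, hmono, hsurj, -⟩ := hf
  exact continuous_of_lift hlift (hmono.monotone.continuous_of_denseRange hsurj.denseRange)

theorem injective (hf : IsOPH f) : Injective f := by
  obtain ⟨ft, hlift, hmono, -, hper⟩ := hf
  exact GoodLift.injective ⟨hlift, hmono.monotone, hper⟩ hmono.injective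

end IsOPH

/-- If `ρ₁, ρ₂` are minimal circle actions and `ρ₁` is left-semi-conjugate to `ρ₂` via a
non-decreasing degree one map `φ`, then `φ` is a homeomorphism, and hence `ρ₁` and `ρ₂`
are conjugate (via `φ`). -/
theorem minimal_semiconj_is_conj {Γ : Type*} [Group Γ]
    (ρ₁ ρ₂ : Γ → Circle1 → Circle1)
    (h₁ : IsCircleAction ρ₁) (h₂ : IsCircleAction ρ₂)
    (hmin₁ : IsMinimalAction ρ₁) (hmin₂ : IsMinimalAction ρ₂)
    (φ : Circle1 → Circle1) (hφ : IsNonDecDegreeOne φ)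
    (hsc : ∀ γ : Γ, ρ₁ γ ∘ φ = φ ∘ ρ₂ γ) :
    ∃ ψ : Circle1 ≃ₜ Circle1, ⇑ψ = φ ∧
      ∀ γ : Γ, ρ₁ γ = ⇑ψ ∘ ρ₂ γ ∘ ⇑ψ.symm := by
  obtain ⟨φt, hφt⟩ := hφ
  have hsc' : ∀ γ p, φ (ρ₂ γ p) = ρ₁ γ (φ p) := fun γ p => (congrFun (hsc γ) p).symm
  have hdense : DenseRange φ :=
    (hmin₁ (φ 0)).mono (range_subset_iff.2 fun γ => ⟨ρ₂ γ 0, hsc' γ 0⟩)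
  have hφt_cont := hφt.continuous_lift_of_denseRange hdense
  have hsurj : Surjective φ := hφt.surjective (hφt.surjective_lift_of_continuous hφt_cont)
  have hL : (locallyConstantLocus φ)ᶜ = ∅ ∨ (locallyConstantLocus φ)ᶜ = univ :=
    (eq_empty_or_nonempty _).imp_right <| eq_univ_of_isClosed_of_mapsTo hmin₂
      isOpen_locallyConstantLocus.isClosed_compl fun γ =>
        mapsTo_compl_locallyConstantLocus (h₂.1 γ).continuous (h₁.1 γ).injective (hsc' γ)
  have hinj : Injective φ := by
    rcases hL with hempty | huniv
    · exact absurd (locallyConstantLocus_eq_univ_iff.1 (compl_empty_iff.1 hempty))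
        (not_isLocallyConstant_of_surjective hsurj)
    · exact hφt.injective
        (hφt.injective_lift_of_locallyConstantLocus_eq_empty (compl_univ_iff.1 huniv))
  let ψ : Circle1 ≃ₜ Circle1 :=
    (hφt.continuous hφt_cont).homeoOfEquivCompactToT2 (f := Equiv.ofBijective φ ⟨hinj, hsurj⟩)
  refine ⟨ψ, rfl, fun γ => funext fun p => ?_⟩
  change ρ₁ γ p = φ (ρ₂ γ (ψ.symm p))
  rw [hsc']
  exact congrArg (ρ₁ γ) (ψ.apply_symm_apply p).symm
end
end
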